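/- arXiv:2012.09485 — 5 statements merged into one kernel-verified Lean document; each statement's English description precedes it below -/
import Mathlib

section
/- For f : ℝ → ℂ and nonzero γ ∈ ℂ, the following are equivalent: (i) for all t, z ∈ ℝ, Δ⁰_t Δ^γ_t Δ^{-γ}_t f(z) = 0; (ii) f ∈ span{1, exp(γz), exp(-γz)}. -/
/-- The univariate difference operator `Δ^γ_t f (z) = f(z+t) - exp(γ t) f(z)`. -/
noncomputable def DeltaUni (γ : ℂ) (t : ℝ) (f : ℝ → ℂ) : ℝ → ℂ :=
  fun z => f (z + t) - Complex.exp (γ * t) * f z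




open Complex Polynomial Finset

/-- Lagrange interpolation at nodes 1, x, x². -/
lemma interp3 (x y u0 u1 u2 : ℂ) (hxy : x * y = 1) (h1 : x ≠ 1) (h2 : x * x ≠ 1) :
    ∃ a b c : ℂ, a + b + c = u0 ∧ a + b * x + c * y = u1 ∧
      a + b * (x * x) + c * (y * y) = u2 := by
  have hne1 : (1 : ℂ) - x ≠ 0 := sub_ne_zero.mpr (fun h => h1 h.symm)
  have hne2 : (1 : ℂ) + x ≠ 0 := by
    intro h
    apply h2
    have : x = -1 := by linear_combination h
    rw [this]; ring
  obtain ⟨D, hD⟩ : ∃ D, ((1-x)^2*(1+x)) * D = 1 :=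
    ⟨((1-x)^2*(1+x))⁻¹, mul_inv_cancel₀ (mul_ne_zero (pow_ne_zero 2 hne1) hne2)⟩
  refine ⟨u0 - (u0 - (1+x)*u1 + x*u2) * D - x^2*(x*u0 - (1+x)*u1 + u2) * D,
    (u0 - (1+x)*u1 + x*u2) * D, x^2*(x*u0 - (1+x)*u1 + u2) * D, by ring, ?_, ?_⟩
  · linear_combination (u1-u0)*hD + D*x*(x*u0-(1+x)*u1+u2)*hxy
  · linear_combination (u2-u0)*hD + D*(x*y+1)*(x*u0-(1+x)*u1+u2)*hxy

/-- Solutions of the third-order recurrence with char roots 1, x, x⁻¹ = y. -/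
lemma rep3 (x y : ℂ) (hxy : x * y = 1) (h1 : x ≠ 1) (h2 : x * x ≠ 1) (u : ℕ → ℂ)
    (hrec : ∀ m : ℕ, u (m+3) - (1+x+y) * u (m+2) + (1+x+y) * u (m+1) - u m = 0) :
    ∃ A B C : ℂ, ∀ m : ℕ, u m = A + B * x ^ m + C * y ^ m := by
  obtain ⟨A, B, C, e0, e1, e2⟩ := interp3 x y (u 0) (u 1) (u 2) hxy h1 h2
  refine ⟨A, B, C, ?_⟩
  intro m
  induction m using Nat.strong_induction_on with
  | _ m ih =>
    match m with
    | 0 => simpa using e0.symm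
    | 1 => simpa [pow_one] using e1.symm
    | 2 => simpa [pow_two] using e2.symm
    | (n+3) =>
      have h0 := ih n (by omega)
      have hh1 := ih (n+1) (by omega)
      have hh2 := ih (n+2) (by omega)
      have hr := hrec n
      rw [h0, hh1, hh2] at hr
      have hu : u (n+3) = (1+x+y) * (A + B * x ^ (n+2) + C * y ^ (n+2))
          - (1+x+y) * (A + B * x ^ (n+1) + C * y ^ (n+1))
          + (A + B * x ^ n + C * y ^ n) := by linear_combination hr
      rw [hu]
      linear_combination (B*x^n*(x-1) + C*y^n*(y-1)) * hxy

open Complex Polynomial Finset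

lemma ext7 (q : ℂ) (hq0 : q ≠ 0) (hq : ∀ j : ℕ, 1 ≤ j → j ≤ 6 → q ^ j ≠ 1)
    (β : Fin 7 → ℂ) (h : ∀ k : ℕ, ∑ j : Fin 7, β j * (q ^ k) ^ (j : ℕ) = 0) :
    ∀ j, β j = 0 := by
  classical
  set p : ℂ[X] := ∑ j : Fin 7, C (β j) * X ^ (j : ℕ) with hp
  have key : ∀ a b : ℕ, a < b → b ≤ 6 → q ^ a ≠ q ^ b := by
    intro a b hab hb6 heq
    have heq2 : q ^ a * q ^ (b - a) = q ^ a * 1 := by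
      rw [mul_one, ← pow_add]
      rw [show a + (b - a) = b by omega]
      exact heq.symm
    exact hq (b - a) (by omega) (by omega) (mul_left_cancel₀ (pow_ne_zero a hq0) heq2)
  have hinj : Function.Injective (fun k : Fin 7 => q ^ (k : ℕ)) := by
    intro k l hkl
    simp only at hkl
    by_contra hne
    rcases Nat.lt_trichotomy (k : ℕ) (l : ℕ) with hlt | heqn | hgt
    · exact key _ _ hlt (by omega) hkl
    · exact hne (Fin.ext heqn)
    · exact key _ _ hgt (by omega) hkl.symm
  have hdeg : p.natDegree < 7 := by
    have : p.natDegree ≤ 6 := by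
      apply Polynomial.natDegree_sum_le_of_forall_le
      intro i _
      refine le_trans (Polynomial.natDegree_C_mul_le _ _) ?_
      rw [Polynomial.natDegree_X_pow]
      omega
    omega
  have heval : ∀ k : Fin 7, p.eval (q ^ (k : ℕ)) = 0 := by
    intro k
    rw [hp]
    rw [Polynomial.eval_finset_sum]
    simpa using h (k : ℕ)
  have hp0 : p = 0 := by
    apply Polynomial.eq_zero_of_natDegree_lt_card_of_eval_eq_zero p hinj heval
    simpa using hdeg
  intro j
  have := congrArg (fun r => Polynomial.coeff r (j : ℕ)) hp0
  simp only [hp, Polynomial.finset_sum_coeff, Polynomial.coeff_C_mul,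
    Polynomial.coeff_X_pow, Polynomial.coeff_zero, mul_ite, mul_one, mul_zero,
    Fin.val_inj] at this
  rwa [Finset.sum_ite_eq Finset.univ j β, if_pos (Finset.mem_univ j)] at this

open Complex

lemma exists_s (γ : ℂ) (hγ : γ ≠ 0) :
    ∃ s : ℝ, ∀ j : ℕ, 1 ≤ j → j ≤ 6 → Complex.exp (γ * s) ^ j ≠ 1 := by
  by_cases hre : γ.re ≠ 0
  · refine ⟨1, fun j hj1 hj6 hexp => ?_⟩
    rw [← Complex.exp_nat_mul] at hexp
    obtain ⟨n, hn⟩ := Complex.exp_eq_one_iff.mp hexp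
    have hre2 := congrArg Complex.re hn
    simp [Complex.mul_re, Complex.mul_im] at hre2
    have hj : (j : ℝ) * γ.re = 0 := by simpa using hre2
    rcases mul_eq_zero.mp hj with h | h
    · exact (by omega : j ≠ 0) (Nat.cast_eq_zero.mp h)
    · exact hre h
  · push_neg at hre
    have him : γ.im ≠ 0 := fun h => hγ (Complex.ext hre h)
    set s : ℝ := Real.pi * Real.sqrt 2 / γ.im with hs
    have hγs : γ * (s : ℂ) = ((Real.pi * Real.sqrt 2 : ℝ) : ℂ) * Complex.I := by
      have h1 : γ.im * s = Real.pi * Real.sqrt 2 := by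
        rw [hs]; field_simp
      apply Complex.ext
      · simp [Complex.mul_re, hre]
      · simp [Complex.mul_im, hre, h1]
    refine ⟨s, fun j hj1 hj6 hexp => ?_⟩
    rw [← Complex.exp_nat_mul, hγs] at hexp
    obtain ⟨n, hn⟩ := Complex.exp_eq_one_iff.mp hexp
    have him2 := congrArg Complex.im hn
    simp [Complex.mul_im, Complex.mul_re] at him2
    have hpi : Real.pi ≠ 0 := Real.pi_ne_zero
    have hsqrt : (j : ℝ) * Real.sqrt 2 = 2 * n := by
      have h2 : Real.pi * ((j:ℝ) * Real.sqrt 2) = Real.pi * (2 * n) := by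
        linear_combination him2
      exact mul_left_cancel₀ hpi h2
    have hj0 : (j : ℝ) ≠ 0 := Nat.cast_ne_zero.mpr (by omega)
    have hj0' : ((j : ℚ) : ℝ) ≠ 0 := by push_cast; exact hj0
    exact irrational_sqrt_two ⟨(2 * n : ℚ) / (j : ℚ), by
      push_cast
      rw [div_eq_iff hj0]
      linarith [hsqrt]⟩

open Complex


section Aux
variable (γ : ℂ)

noncomputable def Kf : ℝ → ℂ := fun u => Complex.exp (γ * u)

lemma Kf_add (u v : ℝ) : Kf γ (u + v) = Kf γ u * Kf γ v := by
  simp only [Kf]; rw [← Complex.exp_add]; congr 1; push_cast; ring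

lemma Kf_zero : Kf γ 0 = 1 := by simp [Kf]

lemma Kf_inv (u : ℝ) : Kf γ u * Kf γ (-u) = 1 := by
  rw [← Kf_add, show u + -u = (0:ℝ) by ring, Kf_zero]

lemma Kf_nat (k : ℕ) (u : ℝ) : Kf γ (k * u) = (Kf γ u) ^ k := by
  simp only [Kf]; rw [← Complex.exp_nat_mul]; congr 1; push_cast; ring

lemma Kf_ne_zero (u : ℝ) : Kf γ u ≠ 0 := Complex.exp_ne_zero _

/-- The model functions satisfy the three-step relation. -/
lemma model_rel (a b c : ℂ) (t z : ℝ) :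
    (a + b * Kf γ (z+t+t+t) + c * Kf γ (-(z+t+t+t)))
    - (1 + Kf γ t + Kf γ (-t)) * ((a + b * Kf γ (z+t+t) + c * Kf γ (-(z+t+t)))
        - (a + b * Kf γ (z+t) + c * Kf γ (-(z+t))))
    - (a + b * Kf γ z + c * Kf γ (-z)) = 0 := by
  rw [show -(z+t+t+t) = (-z) + (-t) + (-t) + (-t) by ring,
      show -(z+t+t) = (-z) + (-t) + (-t) by ring,
      show -(z+t) = (-z) + (-t) by ring,
      Kf_add, Kf_add, Kf_add, Kf_add, Kf_add, Kf_add]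
  linear_combination (b * Kf γ z * (1 - Kf γ t) + c * Kf γ (-z) * (1 - Kf γ (-t))) * Kf_inv γ t

end Aux

section Aux2
variable (γ : ℂ) (f : ℝ → ℂ)

/-- The hypothesis implies the three-step relation for `f`. -/
lemma hyp_rel (hyp : ∀ t z : ℝ, DeltaUni 0 t (DeltaUni γ t (DeltaUni (-γ) t f)) z = 0)
    (t z : ℝ) :
    f (z+t+t+t) - (1 + Kf γ t + Kf γ (-t)) * (f (z+t+t) - f (z+t)) - f z = 0 := by
  have H := hyp t z
  simp only [DeltaUni, zero_mul, Complex.exp_zero, one_mul] at H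
  have e1 : Complex.exp (-γ * (t:ℂ)) = Kf γ (-t) := by
    simp only [Kf]; congr 1; push_cast; ring
  have e2 : Complex.exp (γ * (t:ℂ)) = Kf γ t := rfl
  rw [e1, e2] at H
  linear_combination H + (f z - f (z+t)) * Kf_inv γ t

/-- Reverse direction: models satisfy the original equation. -/
lemma model_hyp (a b c : ℂ)
    (hf : ∀ z : ℝ, f z = a + b * Complex.exp (γ * z) + c * Complex.exp (-γ * z)) :
    ∀ t z : ℝ, DeltaUni 0 t (DeltaUni γ t (DeltaUni (-γ) t f)) z = 0 := by
  intro t z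
  simp only [DeltaUni, zero_mul, Complex.exp_zero, one_mul]
  rw [hf (z+t+t+t), hf (z+t+t), hf (z+t), hf z]
  push_cast
  have E : ∀ (δ w v : ℂ), Complex.exp (δ * (w + v)) = Complex.exp (δ * w) * Complex.exp (δ * v) := by
    intros δ w v; rw [← Complex.exp_add, mul_add]
  rw [E γ (↑z + ↑t + ↑t) ↑t, E γ (↑z + ↑t) ↑t, E γ ↑z ↑t,
      E (-γ) (↑z + ↑t + ↑t) ↑t, E (-γ) (↑z + ↑t) ↑t, E (-γ) ↑z ↑t]
  ring

end Aux2

lemma ext7' (q : ℂ) (hq0 : q ≠ 0) (hq : ∀ j : ℕ, 1 ≤ j → j ≤ 6 → q ^ j ≠ 1)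
    (b0 b1 b2 b3 b4 b5 b6 : ℂ)
    (h : ∀ k : ℕ, b0 + b1*q^k + b2*(q^k)^2 + b3*(q^k)^3 + b4*(q^k)^4
        + b5*(q^k)^5 + b6*(q^k)^6 = 0) :
    b0 = 0 ∧ b1 = 0 ∧ b2 = 0 ∧ b3 = 0 ∧ b4 = 0 ∧ b5 = 0 ∧ b6 = 0 := by
  have hsum : ∀ k : ℕ, ∑ j : Fin 7,
      (![b0, b1, b2, b3, b4, b5, b6] : Fin 7 → ℂ) j * (q ^ k) ^ (j : ℕ) = 0 := by
    intro k
    simp only [Fin.sum_univ_succ, Finset.univ_eq_empty, Finset.sum_empty,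
      Matrix.cons_val_zero, Matrix.cons_val_succ, Fin.val_zero, Fin.val_succ,
      pow_zero, mul_one, add_zero]
    norm_num
    linear_combination h k
  have hβ := ext7 q hq0 hq _ hsum
  refine ⟨?_, ?_, ?_, ?_, ?_, ?_, ?_⟩
  · simpa using hβ 0
  · simpa using hβ 1
  · simpa using hβ 2
  · simpa using hβ 3
  · simpa using hβ 4
  · simpa using hβ 5
  · simpa using hβ 6


/-- `Δ⁰_t Δ^γ_t Δ^{-γ}_t f = 0` for all `t, z` iff
`f ∈ span{1, exp(γz), exp(-γz)}`, for `γ ≠ 0`. -/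
theorem stmt1 (f : ℝ → ℂ) (γ : ℂ) (hγ : γ ≠ 0) :
    (∀ t z : ℝ, DeltaUni 0 t (DeltaUni γ t (DeltaUni (-γ) t f)) z = 0) ↔
    ∃ a b c : ℂ, ∀ z : ℝ,
      f z = a + b * Complex.exp (γ * z) + c * Complex.exp (-γ * z) := by
  constructor
  · intro hyp
    obtain ⟨s, hs⟩ := exists_s γ hγ
    set Q : ℂ := Kf γ s with hQdef
    set Q' : ℂ := Kf γ (-s) with hQ'def
    have hQQ' : Q * Q' = 1 := Kf_inv γ s
    have hQ0 : Q ≠ 0 := Kf_ne_zero γ s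
    have hQ1 : Q ≠ 1 := by
      have := hs 1 le_rfl (by norm_num)
      simpa [hQdef, Kf, pow_one] using this
    have hQ2 : Q * Q ≠ 1 := by
      have := hs 2 (by norm_num) (by norm_num)
      rw [pow_two] at this
      simpa [hQdef, Kf] using this
    obtain ⟨a, b, c, e0, e1, e2⟩ := interp3 Q Q' (f 0) (f s) (f (s+s)) hQQ' hQ1 hQ2
    set g : ℝ → ℂ := fun z => f z - (a + b * Kf γ z + c * Kf γ (-z)) with hgdef
    have relg : ∀ t z : ℝ,
        g (z+t+t+t) - (1 + Kf γ t + Kf γ (-t)) * (g (z+t+t) - g (z+t)) - g z = 0 := by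
      intro t z
      simp only [hgdef]
      linear_combination hyp_rel γ f hyp t z - model_rel γ a b c t z
    have g0 : g 0 = 0 := by
      simp only [hgdef, neg_zero, Kf_zero]
      linear_combination -e0
    have g1 : g s = 0 := by
      simp only [hgdef]
      linear_combination -e1
    have g2 : g (s+s) = 0 := by
      simp only [hgdef, show -(s+s) = (-s) + (-s) by ring, Kf_add]
      linear_combination -e2
    have row0 : ∀ m : ℕ, g (m * s) = 0 := by
      intro m
      induction m using Nat.strong_induction_on with
      | _ m ih =>
        match m with
        | 0 => simpa using g0
        | 1 => simpa using g1
        | 2 => rw [show ((2:ℕ):ℝ) * s = s + s by push_cast; ring]; exact g2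
        | (n+3) =>
          have h0 := ih n (by omega)
          have h1 := ih (n+1) (by omega)
          have h2 := ih (n+2) (by omega)
          rw [show ((n+1:ℕ):ℝ) * s = ↑n*s + s by push_cast; ring] at h1
          rw [show ((n+2:ℕ):ℝ) * s = ↑n*s + s + s by push_cast; ring] at h2
          rw [show ((n+3:ℕ):ℝ) * s = ↑n*s + s + s + s by push_cast; ring]
          have R := relg s (↑n*s)
          linear_combination R + (1 + Kf γ s + Kf γ (-s)) * h2
            - (1 + Kf γ s + Kf γ (-s)) * h1 + h0
    refine ⟨a, b, c, fun w => ?_⟩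
    -- row 1 representation
    have hrec1 : ∀ m : ℕ, (fun m : ℕ => g (↑m*s + w)) (m+3)
        - (1+Q+Q') * (fun m : ℕ => g (↑m*s + w)) (m+2)
        + (1+Q+Q') * (fun m : ℕ => g (↑m*s + w)) (m+1)
        - (fun m : ℕ => g (↑m*s + w)) m = 0 := by
      intro m
      simp only
      rw [show ((m+3:ℕ):ℝ) * s + w = ↑m*s + w + s + s + s by push_cast; ring,
          show ((m+2:ℕ):ℝ) * s + w = ↑m*s + w + s + s by push_cast; ring,
          show ((m+1:ℕ):ℝ) * s + w = ↑m*s + w + s by push_cast; ring]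
      linear_combination relg s (↑m*s + w)
    obtain ⟨A1, B1, C1, hrep1⟩ := rep3 Q Q' hQQ' hQ1 hQ2 (fun m : ℕ => g (↑m*s + w)) hrec1
    have hrep1' : ∀ m : ℕ, g (↑m*s + w) = A1 + B1 * Q^m + C1 * Q'^m := fun m => hrep1 m
    -- row 2 representation
    have hrec2 : ∀ m : ℕ, (fun m : ℕ => g (↑m*s + (w+w))) (m+3)
        - (1+Q+Q') * (fun m : ℕ => g (↑m*s + (w+w))) (m+2)
        + (1+Q+Q') * (fun m : ℕ => g (↑m*s + (w+w))) (m+1)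
        - (fun m : ℕ => g (↑m*s + (w+w))) m = 0 := by
      intro m
      simp only
      rw [show ((m+3:ℕ):ℝ) * s + (w+w) = ↑m*s + (w+w) + s + s + s by push_cast; ring,
          show ((m+2:ℕ):ℝ) * s + (w+w) = ↑m*s + (w+w) + s + s by push_cast; ring,
          show ((m+1:ℕ):ℝ) * s + (w+w) = ↑m*s + (w+w) + s by push_cast; ring]
      linear_combination relg s (↑m*s + (w+w))
    obtain ⟨A2, B2, C2, hrep2⟩ := rep3 Q Q' hQQ' hQ1 hQ2 (fun m : ℕ => g (↑m*s + (w+w))) hrec2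
    have hrep2' : ∀ m : ℕ, g (↑m*s + (w+w)) = A2 + B2 * Q^m + C2 * Q'^m := fun m => hrep2 m
    set Rr : ℂ := Kf γ w with hRrdef
    set Rr' : ℂ := Kf γ (-w) with hRr'def
    have hRR : Rr * Rr' = 1 := Kf_inv γ w
    have hRr0 : Rr ≠ 0 := Kf_ne_zero γ w
    have hEq : ∀ k : ℕ, (A2 + B2*Q^(3*k) + C2*Q'^(3*k))
        - (1 + Q^k*Rr + Q'^k*Rr') * (A1 + B1*Q^(2*k) + C1*Q'^(2*k))
        - g (-w) = 0 := by
      intro k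
      have R := relg (↑k*s + w) (-w)
      rw [show -w + (↑k*s+w) + (↑k*s+w) + (↑k*s+w) = ↑(3*k)*s + (w+w) by push_cast; ring,
          show -w + (↑k*s+w) + (↑k*s+w) = ↑(2*k)*s + w by push_cast; ring,
          show -w + (↑k*s+w) = (k:ℝ)*s by push_cast; ring] at R
      rw [hrep2' (3*k), hrep1' (2*k), row0 k] at R
      rw [Kf_add, show -(↑k*s+w) = (-(↑k*s)) + (-w) by ring, Kf_add,
          show -((k:ℝ)*s) = (k:ℝ)*(-s) by ring, Kf_nat, Kf_nat] at R
      linear_combination R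
    have hpoly : ∀ k : ℕ, (Rr*C2 - C1) + (-Rr*C1)*Q^k + (-Rr^2*C1 - A1)*(Q^k)^2
        + (Rr*(A2 - A1 - g (-w)))*(Q^k)^3 + (-Rr^2*A1 - B1)*(Q^k)^4
        + (-Rr*B1)*(Q^k)^5 + (Rr*B2 - Rr^2*B1)*(Q^k)^6 = 0 := by
      intro k
      have hE := hEq k
      have hk : Q^k * Q'^k = 1 := by rw [← mul_pow, hQQ', one_pow]
      linear_combination (Rr*Q^(3*k)) * hE
        - (Rr*C2*((Q^k*Q'^k)^2 + Q^k*Q'^k + 1) - Rr*C1*Q^k*(Q^k*Q'^k+1)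
           - Rr^2*C1*(Q^k)^2*(Q^k*Q'^k+1) - A1*(Q^k)^2 - B1*(Q^k)^4
           - C1*((Q^k*Q'^k)^2 + Q^k*Q'^k + 1)) * hk
        - (-A1*(Q^k)^3*Q'^k - B1*(Q^k)^5*Q'^k - C1*(Q^k)^3*(Q'^k)^3) * hRR
    obtain ⟨-, hb1, hb2, -, -, hb5, -⟩ :=
      ext7' Q hQ0 (by simpa [hQdef, Kf] using hs) _ _ _ _ _ _ _ hpoly
    have hC1 : C1 = 0 := by
      rcases mul_eq_zero.mp (by linear_combination -hb1 : Rr * C1 = 0) with h | h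
      · exact absurd h hRr0
      · exact h
    have hB1 : B1 = 0 := by
      rcases mul_eq_zero.mp (by linear_combination -hb5 : Rr * B1 = 0) with h | h
      · exact absurd h hRr0
      · exact h
    have hA1 : A1 = 0 := by linear_combination -hb2 - Rr^2 * hC1
    have hgw : g w = 0 := by
      have h00 := hrep1' 0
      rw [hA1, hB1, hC1] at h00
      norm_num at h00
      exact h00
    have hfw : f w = a + b * Kf γ w + c * Kf γ (-w) := by
      have := hgw
      simp only [hgdef] at this
      linear_combination this
    have harg : Kf γ (-w) = Complex.exp (-γ * (w:ℂ)) := by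
      simp only [Kf]; congr 1; push_cast; ring
    rw [hfw, harg]
    rfl
  · rintro ⟨a, b, c, hf⟩
    exact model_hyp γ f a b c hf
end

section
/- Let v ∈ ℝ² be a unit vector, v⊥ = (-v₂, v₁), and γ ∈ ℂ² with γᵀv ≠ 0 and γᵀv⊥ ≠ 0. For a continuously differentiable F : ℝ² → ℂ, one has D_w^γ F = 0 for both w = v and w = v⊥ if and only if there exists c ∈ ℂ such that F(z) = c·exp(γᵀz) for all z ∈ ℝ². -/
/-- Pairing of a complex frequency vector with a real vector: `μᵀ v`. -/
noncomputable def dotCR (μ : Fin 2 → ℂ) (v : Fin 2 → ℝ) : ℂ :=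
  μ 0 * (v 0 : ℂ) + μ 1 * (v 1 : ℂ)

/-- The differential operator `D_v^γ F (z) = (∇F(z) - γ F(z))ᵀ v`. -/
noncomputable def Dop (v : Fin 2 → ℝ) (γ : Fin 2 → ℂ)
    (F : (Fin 2 → ℝ) → ℂ) : (Fin 2 → ℝ) → ℂ :=
  fun z => fderiv ℝ F z v - dotCR γ v * F z

/-- The difference operator `Δ_w^γ F (z) = F(z + w) - exp(γᵀ w) F(z)`. -/
noncomputable def DeltaOp (w : Fin 2 → ℝ) (γ : Fin 2 → ℂ)
    (F : (Fin 2 → ℝ) → ℂ) : (Fin 2 → ℝ) → ℂ :=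
  fun z => F (z + w) - Complex.exp (dotCR γ w) * F z

/-- `dotCR γ` as a continuous ℝ-linear map. -/
noncomputable def Lgam (γ : Fin 2 → ℂ) : (Fin 2 → ℝ) →L[ℝ] ℂ :=
  γ 0 • (Complex.ofRealCLM.comp (ContinuousLinearMap.proj 0)) +
  γ 1 • (Complex.ofRealCLM.comp (ContinuousLinearMap.proj 1))

lemma Lgam_apply (γ : Fin 2 → ℂ) (w : Fin 2 → ℝ) : Lgam γ w = dotCR γ w := by
  simp [Lgam, dotCR, mul_comm]

/-- for a unit vector `v`, `v⊥ = (-v₂, v₁)`, and `γ ∈ ℂ²` with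
`γᵀv ≠ 0` and `γᵀv⊥ ≠ 0`, a C¹ function `F` satisfies `D_w^γ F = 0` for
`w ∈ {v, v⊥}` iff `F(z) = c exp(γᵀ z)` for some `c ∈ ℂ`. -/
theorem stmt4 (F : (Fin 2 → ℝ) → ℂ) (hF : ContDiff ℝ 1 F)
    (v : Fin 2 → ℝ) (hv : v 0 ^ 2 + v 1 ^ 2 = 1) (γ : Fin 2 → ℂ)
    (h1 : dotCR γ v ≠ 0) (h2 : dotCR γ ![-v 1, v 0] ≠ 0) :
    ((∀ z, Dop v γ F z = 0) ∧ (∀ z, Dop ![-v 1, v 0] γ F z = 0)) ↔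
    ∃ c : ℂ, ∀ z, F z = c * Complex.exp (dotCR γ z) := by
  have hFd : Differentiable ℝ F := hF.differentiable one_ne_zero
  constructor
  · rintro ⟨hA, hB⟩
    -- key: ∇F(z)·w = (γᵀw) F(z) for all w
    have hkey : ∀ z w, fderiv ℝ F z w = dotCR γ w * F z := by
      intro z w
      have hAv : fderiv ℝ F z v = dotCR γ v * F z := by
        have := hA z; simpa [Dop, sub_eq_zero] using this
      have hBv : fderiv ℝ F z ![-v 1, v 0] = dotCR γ ![-v 1, v 0] * F z := by
        have := hB z; simpa [Dop, sub_eq_zero] using this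
      set a : ℝ := w 0 * v 0 + w 1 * v 1 with ha
      set b : ℝ := - w 0 * v 1 + w 1 * v 0 with hb
      have hw : w = a • v + b • ![-v 1, v 0] := by
        funext i
        fin_cases i
        · show w 0 = a • v 0 + b • (![-v 1, v 0] 0)
          simp only [Matrix.cons_val_zero, smul_eq_mul, ha, hb]
          linear_combination (-(w 0)) * hv
        · show w 1 = a • v 1 + b • (![-v 1, v 0] 1)
          simp only [Matrix.cons_val_one, Matrix.head_cons, Matrix.cons_val_zero, smul_eq_mul, ha, hb]
          linear_combination (-(w 1)) * hv
      have hlin : fderiv ℝ F z w = a • fderiv ℝ F z v + b • fderiv ℝ F z ![-v 1, v 0] := by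
        rw [hw, (fderiv ℝ F z).map_add, (fderiv ℝ F z).map_smul, (fderiv ℝ F z).map_smul]
      have hd : dotCR γ w = (a : ℂ) * dotCR γ v + (b : ℂ) * dotCR γ ![-v 1, v 0] := by
        have hvC : (v 0 : ℂ) ^ 2 + (v 1 : ℂ) ^ 2 = 1 := by
          have h := congrArg (Complex.ofReal) hv
          push_cast at h
          exact h
        simp only [dotCR, ha, hb, Matrix.cons_val_zero, Matrix.cons_val_one, Matrix.head_cons]
        push_cast
        linear_combination (-(γ 0 * (w 0 : ℂ) + γ 1 * (w 1 : ℂ))) * hvC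
      rw [hlin, hAv, hBv, hd]
      simp only [smul_eq_mul, Complex.real_smul]
      ring
    -- g := exp(-γᵀz) F z is constant
    set g : (Fin 2 → ℝ) → ℂ := fun z => Complex.exp (-(Lgam γ) z) * F z with hg
    have hgd : ∀ z, HasFDerivAt g (0 : (Fin 2 → ℝ) →L[ℝ] ℂ) z := by
      intro z
      have hL : HasFDerivAt (fun z : Fin 2 → ℝ => -(Lgam γ) z) (-(Lgam γ)) z :=
        ((Lgam γ).hasFDerivAt).neg
      have hexp := hL.cexp
      have hFz := (hFd z).hasFDerivAt
      have hmul := hexp.mul hFz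
      refine hmul.congr_fderiv ?_
      refine ContinuousLinearMap.ext fun w => ?_
      simp only [ContinuousLinearMap.zero_apply, ContinuousLinearMap.add_apply,
        ContinuousLinearMap.smul_apply, ContinuousLinearMap.neg_apply, smul_eq_mul,
        ContinuousLinearMap.coe_smul', Pi.smul_apply]
      rw [hkey z w]
      simp only [Lgam_apply]
      ring
    have hconst : ∀ z, g z = g 0 := by
      intro z
      exact is_const_of_fderiv_eq_zero (fun x => (hgd x).differentiableAt)
        (fun x => (hgd x).fderiv) z 0
    refine ⟨F 0, fun z => ?_⟩
    have h0 : g 0 = F 0 := by simp [hg, ContinuousLinearMap.map_zero]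
    have hz := hconst z
    rw [h0] at hz
    have hz' : Complex.exp (-(Lgam γ) z) * F z = F 0 := hz
    have : F z = F 0 * Complex.exp ((Lgam γ) z) := by
      rw [← hz', mul_comm (Complex.exp (-(Lgam γ) z)) (F z), mul_assoc, ← Complex.exp_add,
        neg_add_cancel, Complex.exp_zero, mul_one]
    rw [this, Lgam_apply]
  · rintro ⟨c, hc⟩
    have hFderiv : ∀ z, HasFDerivAt F (Complex.exp (dotCR γ z) • (c • (Lgam γ))) z := by
      intro z
      have hL : HasFDerivAt (fun z : Fin 2 → ℝ => (Lgam γ) z) (Lgam γ) z :=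
        (Lgam γ).hasFDerivAt
      have hexp : HasFDerivAt (fun z : Fin 2 → ℝ => Complex.exp ((Lgam γ) z))
          (Complex.exp ((Lgam γ) z) • (Lgam γ)) z := hL.cexp
      have := hexp.const_smul c
      have heq : (fun z : Fin 2 → ℝ => c • Complex.exp ((Lgam γ) z)) = F := by
        funext z; rw [hc z, Lgam_apply]; simp [mul_comm]
      simp only [Pi.smul_def] at this
      rw [heq] at this
      rw [Lgam_apply] at this
      rw [smul_comm]
      exact this
    constructor <;> intro z <;>
    · simp only [Dop, (hFderiv z).fderiv, hc z, ContinuousLinearMap.smul_apply,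
        ContinuousLinearMap.coe_smul', Pi.smul_apply, smul_eq_mul, Lgam_apply]
      ring
end

section
/- Let γ¹, ..., γⁿ ∈ ℂ² be pairwise distinct and let v be a unit vector with (γ^ℓ - γⁿ)ᵀ v ≠ 0 for ℓ = 1, ..., n-1. If a C¹ function F : ℝ² → ℂ satisfies D_v^{γⁿ} F(z) = Σ_{ℓ=1}^{n-1} c_ℓ exp((γ^ℓ)ᵀ z) for some constants c_ℓ ∈ ℂ, then there exist constants d_ℓ ∈ ℂ and a function κ : ℝ → ℂ such that F(z) = Σ_{ℓ=1}^{n-1} d_ℓ exp((γ^ℓ)ᵀ z) + κ(zᵀ v⊥) exp((γⁿᵀ v)(zᵀ v)) for all z ∈ ℝ². -/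
noncomputable def Lc (γ : Fin 2 → ℂ) : (Fin 2 → ℝ) →L[ℝ] ℂ :=
  γ 0 • (Complex.ofRealCLM.comp (ContinuousLinearMap.proj 0))
  + γ 1 • (Complex.ofRealCLM.comp (ContinuousLinearMap.proj 1))

lemma Lc_apply (γ : Fin 2 → ℂ) (z : Fin 2 → ℝ) : Lc γ z = dotCR γ z := by
  simp [Lc, dotCR]

lemma hE (γ : Fin 2 → ℂ) (z : Fin 2 → ℝ) :
    HasFDerivAt (fun w => Complex.exp (dotCR γ w))
      (Complex.exp (dotCR γ z) • Lc γ) z := by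
  have h := ((Lc γ).hasFDerivAt (x := z)).cexp
  simp only [Lc_apply] at h
  exact h

theorem stmt6' (n : ℕ) (γ : Fin n → Fin 2 → ℂ) (γn : Fin 2 → ℂ)
    (v : Fin 2 → ℝ) (hv : v 0 ^ 2 + v 1 ^ 2 = 1)
    (hvγ : ∀ ℓ, dotCR (γ ℓ - γn) v ≠ 0)
    (F : (Fin 2 → ℝ) → ℂ) (hF : ContDiff ℝ 1 F) (c : Fin n → ℂ)
    (h : ∀ z, Dop v γn F z = ∑ ℓ, c ℓ * Complex.exp (dotCR (γ ℓ) z)) :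
    ∃ (d : Fin n → ℂ) (κ : ℝ → ℂ), ∀ z,
      F z = (∑ ℓ, d ℓ * Complex.exp (dotCR (γ ℓ) z))
        + κ (z 0 * (-v 1) + z 1 * v 0)
          * Complex.exp (dotCR γn v * ((z 0 * v 0 + z 1 * v 1) : ℝ)) := by
  set μ := dotCR γn v with hμ
  set d : Fin n → ℂ := fun ℓ => c ℓ / dotCR (γ ℓ - γn) v with hd
  set G : (Fin 2 → ℝ) → ℂ :=
    fun z => F z - ∑ ℓ, d ℓ * Complex.exp (dotCR (γ ℓ) z) with hGdef
  have hFd : ∀ z, HasFDerivAt F (fderiv ℝ F z) z := fun z =>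
    (hF.differentiable one_ne_zero z).hasFDerivAt
  have hGfd : ∀ z, HasFDerivAt G
      (fderiv ℝ F z - ∑ ℓ, (d ℓ * Complex.exp (dotCR (γ ℓ) z)) • Lc (γ ℓ)) z := by
    intro z
    exact (hFd z).sub <| HasFDerivAt.fun_sum fun ℓ _ => by
      simpa [smul_smul] using ((hE (γ ℓ) z).fun_const_smul (d ℓ))
  have hkey : ∀ z, (fderiv ℝ F z - ∑ ℓ, (d ℓ * Complex.exp (dotCR (γ ℓ) z)) • Lc (γ ℓ)) v
      = μ * G z := by
    intro z
    have h1 := h z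
    simp only [Dop] at h1
    have h2 : fderiv ℝ F z v = μ * F z + ∑ ℓ, c ℓ * Complex.exp (dotCR (γ ℓ) z) := by
      rw [← h1]; ring
    simp only [ContinuousLinearMap.sub_apply, ContinuousLinearMap.sum_apply,
      ContinuousLinearMap.smul_apply, Lc_apply, h2, hGdef, smul_eq_mul]
    have hterm : ∀ ℓ : Fin n, c ℓ * Complex.exp (dotCR (γ ℓ) z)
        - d ℓ * Complex.exp (dotCR (γ ℓ) z) * dotCR (γ ℓ) v
        = -(μ * (d ℓ * Complex.exp (dotCR (γ ℓ) z))) := by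
      intro ℓ
      have hc : d ℓ * dotCR (γ ℓ - γn) v = c ℓ := div_mul_cancel₀ _ (hvγ ℓ)
      have hsub : dotCR (γ ℓ - γn) v = dotCR (γ ℓ) v - μ := by
        simp only [dotCR, hμ, Pi.sub_apply]; ring
      rw [hsub] at hc
      linear_combination (-Complex.exp (dotCR (γ ℓ) z)) * hc
    calc μ * F z + (∑ ℓ, c ℓ * Complex.exp (dotCR (γ ℓ) z))
          - ∑ ℓ, d ℓ * Complex.exp (dotCR (γ ℓ) z) * dotCR (γ ℓ) v
        = μ * F z + ∑ ℓ, (c ℓ * Complex.exp (dotCR (γ ℓ) z)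
            - d ℓ * Complex.exp (dotCR (γ ℓ) z) * dotCR (γ ℓ) v) := by
          rw [Finset.sum_sub_distrib]; ring
      _ = μ * F z + ∑ ℓ, -(μ * (d ℓ * Complex.exp (dotCR (γ ℓ) z))) := by
          rw [Finset.sum_congr rfl fun ℓ _ => hterm ℓ]
      _ = μ * (F z - ∑ ℓ, d ℓ * Complex.exp (dotCR (γ ℓ) z)) := by
          rw [Finset.sum_neg_distrib, mul_sub, Finset.mul_sum]; ring
  have main : ∀ (z0 : Fin 2 → ℝ) (s : ℝ),
      G (z0 + s • v) = G z0 * Complex.exp (μ * (s : ℂ)) := by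
    intro z0 s
    have hline : ∀ s : ℝ, HasDerivAt (fun s : ℝ => G (z0 + s • v))
        (μ * G (z0 + s • v)) s := by
      intro s
      have hc : HasDerivAt (fun s : ℝ => z0 + s • v) v s := by
        simpa using ((hasDerivAt_id s).smul_const v).const_add z0
      have h4 := (hGfd (z0 + s • v)).comp_hasDerivAt s hc
      rw [hkey (z0 + s • v)] at h4
      exact h4
    have hexp : ∀ s : ℝ, HasDerivAt (fun s : ℝ => Complex.exp (-μ * (s : ℂ)))
        (-μ * Complex.exp (-μ * (s : ℂ))) s := by
      intro s
      have h0 : HasDerivAt (fun s : ℝ => (-μ) * (s : ℂ)) (-μ) s := by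
        simpa using (Complex.ofRealCLM.hasDerivAt (x := s)).const_mul (-μ)
      simpa [mul_comm] using h0.cexp
    have hh : ∀ s : ℝ, HasDerivAt
        (fun s : ℝ => G (z0 + s • v) * Complex.exp (-μ * (s : ℂ))) 0 s := by
      intro s
      have h5 := (hline s).fun_mul (hexp s)
      exact h5.congr_deriv (by ring)
    have hconst := is_const_of_deriv_eq_zero
      (f := fun s : ℝ => G (z0 + s • v) * Complex.exp (-μ * (s : ℂ)))
      (fun s => (hh s).differentiableAt) (fun s => (hh s).deriv) s 0
    simp only [Complex.ofReal_zero, mul_zero, Complex.exp_zero, mul_one, zero_smul,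
      add_zero] at hconst
    have hmul : Complex.exp (-μ * (s : ℂ)) * Complex.exp (μ * (s : ℂ)) = 1 := by
      rw [← Complex.exp_add, show -μ * (s : ℂ) + μ * (s : ℂ) = 0 by ring, Complex.exp_zero]
    calc G (z0 + s • v)
        = G (z0 + s • v) * (Complex.exp (-μ * (s : ℂ)) * Complex.exp (μ * (s : ℂ))) := by
          rw [hmul, mul_one]
      _ = (G (z0 + s • v) * Complex.exp (-μ * (s : ℂ))) * Complex.exp (μ * (s : ℂ)) := by
          ring
      _ = G z0 * Complex.exp (μ * (s : ℂ)) := by rw [hconst]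
  refine ⟨d, fun t => G (t • ![-v 1, v 0]), fun z => ?_⟩
  have hz : ((z 0 * (-v 1) + z 1 * v 0)) • ![-v 1, v 0]
      + ((z 0 * v 0 + z 1 * v 1)) • v = z := by
    funext i
    fin_cases i <;>
      simp only [Fin.mk_zero, Fin.mk_one, Pi.add_apply, Pi.smul_apply, smul_eq_mul,
        Matrix.cons_val_zero, Matrix.cons_val_one, Matrix.head_cons, Fin.isValue]
    · linear_combination (z 0) * hv
    · linear_combination (z 1) * hv
  have h3 := main ((z 0 * (-v 1) + z 1 * v 0) • ![-v 1, v 0]) (z 0 * v 0 + z 1 * v 1)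
  rw [hz] at h3
  show F z = _ + G ((z 0 * (-v 1) + z 1 * v 0) • ![-v 1, v 0])
      * Complex.exp (μ * ((z 0 * v 0 + z 1 * v 1 : ℝ) : ℂ))
  rw [← h3, hGdef]
  ring


/-- Lemma 2.5: the non-homogeneous case. Here `γ ℓ`, `ℓ = 0,…,n-1`,
play the role of the first `n-1` frequencies and `γn` that of `γⁿ`. -/
theorem stmt6 (n : ℕ) (γ : Fin n → Fin 2 → ℂ) (γn : Fin 2 → ℂ)
    (hinj : Function.Injective γ) (hne : ∀ ℓ, γ ℓ ≠ γn)
    (v : Fin 2 → ℝ) (hv : v 0 ^ 2 + v 1 ^ 2 = 1)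
    (hvγ : ∀ ℓ, dotCR (γ ℓ - γn) v ≠ 0)
    (F : (Fin 2 → ℝ) → ℂ) (hF : ContDiff ℝ 1 F) (c : Fin n → ℂ)
    (h : ∀ z, Dop v γn F z = ∑ ℓ, c ℓ * Complex.exp (dotCR (γ ℓ) z)) :
    ∃ (d : Fin n → ℂ) (κ : ℝ → ℂ), ∀ z,
      F z = (∑ ℓ, d ℓ * Complex.exp (dotCR (γ ℓ) z))
        + κ (z 0 * (-v 1) + z 1 * v 0)
          * Complex.exp (dotCR γn v * ((z 0 * v 0 + z 1 * v 1) : ℝ)) := by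
  exact stmt6' n γ γn v hv hvγ F hF c h
end

section
/- Let γ¹, ..., γⁿ ∈ ℂ² be pairwise distinct. A sufficiently smooth function F : ℝ² → ℂ satisfies D_{v¹}^{γ¹} D_{v²}^{γ²} ⋯ D_{vⁿ}^{γⁿ} F = 0 for all choices of unit vectors v¹, ..., vⁿ ∈ ℝ² if and only if F(z) = Σ_{ℓ=1}^n c_ℓ exp((γ^ℓ)ᵀ z) for some constants c₁, ..., cₙ ∈ ℂ. -/
open scoped ContDiff

noncomputable def linCR (μ : Fin 2 → ℂ) : (Fin 2 → ℝ) →L[ℝ] ℂ :=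
  μ 0 • (Complex.ofRealCLM.comp (ContinuousLinearMap.proj 0)) +
  μ 1 • (Complex.ofRealCLM.comp (ContinuousLinearMap.proj 1))

lemma linCR_apply (μ : Fin 2 → ℂ) (v : Fin 2 → ℝ) : linCR μ v = dotCR μ v := by
  simp [linCR, dotCR, mul_comm]

noncomputable def expE (μ : Fin 2 → ℂ) (z : Fin 2 → ℝ) : ℂ := Complex.exp (dotCR μ z)

lemma expE_eq (μ : Fin 2 → ℂ) : expE μ = fun z => Complex.exp (linCR μ z) := by
  funext z; rw [expE, linCR_apply]

lemma contDiff_expE (μ : Fin 2 → ℂ) : ContDiff ℝ ∞ (expE μ) := by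
  rw [expE_eq]
  exact Complex.contDiff_exp.comp (linCR μ).contDiff

lemma hasFDerivAt_expE (μ : Fin 2 → ℂ) (z : Fin 2 → ℝ) :
    HasFDerivAt (expE μ) (expE μ z • linCR μ) z := by
  rw [expE_eq]
  simpa using ((linCR μ).hasFDerivAt (x := z)).cexp

lemma fderiv_expE (μ : Fin 2 → ℂ) (z : Fin 2 → ℝ) (v : Fin 2 → ℝ) :
    fderiv ℝ (expE μ) z v = dotCR μ v * expE μ z := by
  rw [(hasFDerivAt_expE μ z).fderiv]
  simp [linCR_apply, mul_comm]

lemma expE_add (μ ν : Fin 2 → ℂ) (z : Fin 2 → ℝ) :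
    expE μ z * expE ν z = expE (μ + ν) z := by
  rw [expE, expE, expE, ← Complex.exp_add]
  congr 1
  simp [dotCR]; ring

-- sums of exponentials
lemma hasFDerivAt_sumExp {m : ℕ} (c : Fin m → ℂ) (μ : Fin m → Fin 2 → ℂ) (z : Fin 2 → ℝ) :
    HasFDerivAt (fun z => ∑ ℓ, c ℓ * expE (μ ℓ) z)
      (∑ ℓ, (c ℓ * expE (μ ℓ) z) • linCR (μ ℓ)) z := by
  exact HasFDerivAt.fun_sum fun ℓ _ => by
    simpa [smul_smul] using ((hasFDerivAt_expE (μ ℓ) z).const_mul (c ℓ))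

lemma Dop_sumExp {m : ℕ} (v : Fin 2 → ℝ) (γ' : Fin 2 → ℂ)
    (c : Fin m → ℂ) (μ : Fin m → Fin 2 → ℂ) :
    Dop v γ' (fun z => ∑ ℓ, c ℓ * expE (μ ℓ) z)
      = fun z => ∑ ℓ, (c ℓ * (dotCR (μ ℓ) v - dotCR γ' v)) * expE (μ ℓ) z := by
  funext z
  rw [Dop, (hasFDerivAt_sumExp c μ z).fderiv]
  simp only [ContinuousLinearMap.coe_sum', Finset.sum_apply, ContinuousLinearMap.coe_smul',
    Pi.smul_apply, linCR_apply, smul_eq_mul, Finset.mul_sum, ← Finset.sum_sub_distrib]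
  exact Finset.sum_congr rfl fun ℓ _ => by ring

lemma fold_exp {n m : ℕ} (γ : Fin n → Fin 2 → ℂ) (v : Fin n → Fin 2 → ℝ)
    (μ : Fin m → Fin 2 → ℂ) (c : Fin m → ℂ) (L : List (Fin n)) :
    L.foldr (fun i G => Dop (v i) (γ i) G) (fun z => ∑ ℓ, c ℓ * expE (μ ℓ) z)
      = fun z => ∑ ℓ, (c ℓ *
          (L.map (fun i => dotCR (μ ℓ) (v i) - dotCR (γ i) (v i))).prod) * expE (μ ℓ) z := by
  induction L with
  | nil => simp
  | cons i L ih =>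
    rw [List.foldr_cons, ih, Dop_sumExp]
    funext z
    refine Finset.sum_congr rfl fun ℓ _ => by rw [List.map_cons, List.prod_cons]; ring

noncomputable def expChar (μ : Fin 2 → ℂ) : Multiplicative (Fin 2 → ℝ) →* ℂ where
  toFun z := expE μ (Multiplicative.toAdd z)
  map_one' := by
    show Complex.exp (dotCR μ 0) = 1
    simp [dotCR]
  map_mul' x y := by
    show Complex.exp (dotCR μ (Multiplicative.toAdd x + Multiplicative.toAdd y)) = _
    rw [show dotCR μ (Multiplicative.toAdd x + Multiplicative.toAdd y)
        = dotCR μ (Multiplicative.toAdd x) + dotCR μ (Multiplicative.toAdd y) by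
      simp [dotCR]; ring]
    rw [Complex.exp_add]; rfl

lemma expChar_injective : Function.Injective expChar := by
  intro μ ν h
  have hz : ∀ z, expE μ z = expE ν z := fun z => congrFun (congrArg (·.toFun) h) z
  funext i
  have key : ∀ (a : ℂ), HasDerivAt (fun t : ℝ => Complex.exp (a * t)) a 0 := by
    intro a
    have h1 : HasDerivAt (fun t : ℝ => (t : ℂ)) 1 0 := by
      have := Complex.ofRealCLM.hasDerivAt (x := (0:ℝ)); simp at this; exact this
    simpa using (h1.const_mul a).cexp
  have heq : (fun t : ℝ => Complex.exp (μ i * t)) = fun t : ℝ => Complex.exp (ν i * t) := by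
    funext t
    have := hz (fun j => if j = i then t else 0)
    simp only [expE, dotCR] at this
    fin_cases i <;> simpa using this
  exact (key (μ i)).unique (heq ▸ key (ν i))

lemma exp_indep {m : ℕ} (μ : Fin m → Fin 2 → ℂ) (hμ : Function.Injective μ)
    (c : Fin m → ℂ) (h : ∀ z, ∑ ℓ, c ℓ * expE (μ ℓ) z = 0) : ∀ ℓ, c ℓ = 0 := by
  have li : LinearIndependent ℂ (fun ℓ : Fin m => ((expChar (μ ℓ)) : Multiplicative (Fin 2 → ℝ) → ℂ)) :=
    (linearIndependent_monoidHom (Multiplicative (Fin 2 → ℝ)) ℂ).comp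
      (fun ℓ => expChar (μ ℓ)) (expChar_injective.comp hμ)
  exact Fintype.linearIndependent_iff.mp li c (by
    funext z
    simpa [expChar, smul_eq_mul] using h (Multiplicative.toAdd z))

lemma contDiff_Dop (v : Fin 2 → ℝ) (γ' : Fin 2 → ℂ) {F : (Fin 2 → ℝ) → ℂ}
    (hF : ContDiff ℝ ∞ F) : ContDiff ℝ ∞ (Dop v γ' F) := by
  have h1 : ContDiff ℝ ∞ (fderiv ℝ F) := hF.fderiv_right (by decide)
  exact (h1.clm_apply contDiff_const).sub (contDiff_const.mul hF)

lemma foldr_finRange_succ {α : Type*} (n : ℕ) (f : Fin (n+1) → α → α) (x : α) :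
    (List.finRange (n+1)).foldr (fun i a => f i a) x
      = (List.finRange n).foldr (fun i a => f i.castSucc a) (f (Fin.last n) x) := by
  rw [List.finRange_succ_last, List.foldr_append, List.foldr_map]
  rfl

lemma unit_e1 : (![1,0] : Fin 2 → ℝ) 0 ^ 2 + (![1,0] : Fin 2 → ℝ) 1 ^ 2 = 1 := by norm_num
lemma unit_e2 : (![0,1] : Fin 2 → ℝ) 0 ^ 2 + (![0,1] : Fin 2 → ℝ) 1 ^ 2 = 1 := by norm_num

lemma dotCR_e1 (μ : Fin 2 → ℂ) : dotCR μ ![1,0] = μ 0 := by simp [dotCR]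
lemma dotCR_e2 (μ : Fin 2 → ℂ) : dotCR μ ![0,1] = μ 1 := by simp [dotCR]

lemma vec_decomp (v : Fin 2 → ℝ) : v = v 0 • (![1,0] : Fin 2 → ℝ) + v 1 • ![0,1] := by
  funext i; fin_cases i <;> simp

lemma clm_eq_zero (L : (Fin 2 → ℝ) →L[ℝ] ℂ) (h1 : L ![1,0] = 0) (h2 : L ![0,1] = 0) : L = 0 := by
  ext v
  calc L v = L (v 0 • ![1,0] + v 1 • ![0,1]) := by rw [← vec_decomp v]
    _ = 0 := by rw [map_add, map_smul, map_smul, h1, h2]; simp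

lemma dotCR_neg (μ : Fin 2 → ℂ) (v : Fin 2 → ℝ) : dotCR (-μ) v = -dotCR μ v := by
  simp [dotCR]; ring

lemma fderiv_sumExp {m : ℕ} (c : Fin m → ℂ) (μ : Fin m → Fin 2 → ℂ) (z v : Fin 2 → ℝ) :
    fderiv ℝ (fun z => ∑ ℓ, c ℓ * expE (μ ℓ) z) z v
      = ∑ ℓ, (c ℓ * dotCR (μ ℓ) v) * expE (μ ℓ) z := by
  rw [(hasFDerivAt_sumExp c μ z).fderiv]
  simp only [ContinuousLinearMap.coe_sum', Finset.sum_apply, ContinuousLinearMap.coe_smul',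
    Pi.smul_apply, linCR_apply, smul_eq_mul]
  exact Finset.sum_congr rfl fun ℓ _ => by ring

lemma mixed_symm {H : (Fin 2 → ℝ) → ℂ} (hH : ContDiff ℝ ∞ H) (z : Fin 2 → ℝ) :
    fderiv ℝ (fun y => fderiv ℝ H y ![1,0]) z ![0,1]
      = fderiv ℝ (fun y => fderiv ℝ H y ![0,1]) z ![1,0] := by
  have hd : ContDiff ℝ ∞ (fderiv ℝ H) := hH.fderiv_right (by decide)
  have sym : IsSymmSndFDerivAt ℝ H z := (hH.contDiffAt).isSymmSndFDerivAt (by rw [minSmoothness_of_isRCLikeNormedField]; decide)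
  have key : ∀ u w : Fin 2 → ℝ, fderiv ℝ (fun y => fderiv ℝ H y u) z w
      = fderiv ℝ (fderiv ℝ H) z w u := by
    intro u w
    rw [fderiv_clm_apply (hd.differentiable (by decide) z) (differentiableAt_const u)]
    simp
  rw [key, key]
  exact sym _ _

lemma step {m : ℕ} (μ : Fin m → Fin 2 → ℂ) (hμ0 : ∀ ℓ, μ ℓ ≠ 0) (hμinj : Function.Injective μ)
    (H : (Fin 2 → ℝ) → ℂ) (hH : ContDiff ℝ ∞ H) (a b : Fin m → ℂ)
    (h1 : ∀ z, fderiv ℝ H z ![1,0] = ∑ ℓ, a ℓ * expE (μ ℓ) z)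
    (h2 : ∀ z, fderiv ℝ H z ![0,1] = ∑ ℓ, b ℓ * expE (μ ℓ) z) :
    ∃ c0 : ℂ, ∃ c : Fin m → ℂ, ∀ z, H z = c0 + ∑ ℓ, c ℓ * expE (μ ℓ) z := by
  have hrel : ∀ ℓ, a ℓ * μ ℓ 1 = b ℓ * μ ℓ 0 := by
    have hmix : ∀ z, ∑ ℓ, (a ℓ * μ ℓ 1 - b ℓ * μ ℓ 0) * expE (μ ℓ) z = 0 := by
      intro z
      have e1 : fderiv ℝ (fun y => fderiv ℝ H y ![1,0]) z ![0,1]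
          = ∑ ℓ, (a ℓ * μ ℓ 1) * expE (μ ℓ) z := by
        rw [show (fun y => fderiv ℝ H y ![1,0]) = fun y => ∑ ℓ, a ℓ * expE (μ ℓ) y from
          funext h1, fderiv_sumExp]
        simp [dotCR_e2]
      have e2 : fderiv ℝ (fun y => fderiv ℝ H y ![0,1]) z ![1,0]
          = ∑ ℓ, (b ℓ * μ ℓ 0) * expE (μ ℓ) z := by
        rw [show (fun y => fderiv ℝ H y ![0,1]) = fun y => ∑ ℓ, b ℓ * expE (μ ℓ) y from
          funext h2, fderiv_sumExp]
        simp [dotCR_e1]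
      have hm := mixed_symm hH z
      rw [e1, e2] at hm
      calc ∑ ℓ, (a ℓ * μ ℓ 1 - b ℓ * μ ℓ 0) * expE (μ ℓ) z
          = ∑ ℓ, ((a ℓ * μ ℓ 1) * expE (μ ℓ) z - (b ℓ * μ ℓ 0) * expE (μ ℓ) z) :=
            Finset.sum_congr rfl fun ℓ _ => by ring
        _ = 0 := by rw [Finset.sum_sub_distrib, hm, sub_self]
    intro ℓ
    exact sub_eq_zero.mp (exp_indep μ hμinj _ hmix ℓ)
  have hμ1 : ∀ ℓ, μ ℓ 0 = 0 → μ ℓ 1 ≠ 0 := by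
    intro ℓ h0 h1'
    exact hμ0 ℓ (funext fun i => by fin_cases i <;> simp [h0, h1'])
  set c : Fin m → ℂ := fun ℓ => if μ ℓ 0 = 0 then b ℓ / μ ℓ 1 else a ℓ / μ ℓ 0 with hc
  have hc1 : ∀ ℓ, c ℓ * μ ℓ 0 = a ℓ := by
    intro ℓ; by_cases h : μ ℓ 0 = 0
    · have ha : a ℓ = 0 := by
        have h' := hrel ℓ
        rw [h, mul_zero] at h'
        exact (mul_eq_zero.mp h').resolve_right (hμ1 ℓ h)
      simp [hc, h, ha]
    · simp only [hc, h, if_false]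
      field_simp
  have hc2 : ∀ ℓ, c ℓ * μ ℓ 1 = b ℓ := by
    intro ℓ; by_cases h : μ ℓ 0 = 0
    · simp only [hc, h, if_true]
      field_simp [hμ1 ℓ h]
    · simp only [hc, h, if_false]
      field_simp
      linear_combination hrel ℓ
  set K : (Fin 2 → ℝ) → ℂ := fun z => H z - ∑ ℓ, c ℓ * expE (μ ℓ) z with hK
  have hKdiff : Differentiable ℝ K :=
    (hH.differentiable (by decide)).sub fun z => (hasFDerivAt_sumExp c μ z).differentiableAt
  have hKf : ∀ z, fderiv ℝ K z = 0 := by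
    intro z
    have hds : DifferentiableAt ℝ (fun z => ∑ ℓ, c ℓ * expE (μ ℓ) z) z :=
      (hasFDerivAt_sumExp c μ z).differentiableAt
    have hfd : fderiv ℝ K z
        = fderiv ℝ H z - fderiv ℝ (fun z => ∑ ℓ, c ℓ * expE (μ ℓ) z) z :=
      fderiv_sub (hH.differentiable (by decide) z) hds
    apply clm_eq_zero
    · rw [hfd, ContinuousLinearMap.sub_apply, h1 z, fderiv_sumExp, sub_eq_zero]
      exact Finset.sum_congr rfl fun ℓ _ => by rw [dotCR_e1, hc1 ℓ]
    · rw [hfd, ContinuousLinearMap.sub_apply, h2 z, fderiv_sumExp, sub_eq_zero]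
      exact Finset.sum_congr rfl fun ℓ _ => by rw [dotCR_e2, hc2 ℓ]
  refine ⟨K 0, c, fun z => ?_⟩
  have hcz := is_const_of_fderiv_eq_zero hKdiff hKf z 0
  have : H z - ∑ ℓ, c ℓ * expE (μ ℓ) z = K 0 := hcz
  linear_combination this

lemma forward : ∀ (n : ℕ) (γ : Fin n → Fin 2 → ℂ), Function.Injective γ →
    ∀ F : (Fin 2 → ℝ) → ℂ, ContDiff ℝ ∞ F →
    (∀ v : Fin n → Fin 2 → ℝ, (∀ i, (v i) 0 ^ 2 + (v i) 1 ^ 2 = 1) →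
      ∀ z, ((List.finRange n).foldr (fun i G => Dop (v i) (γ i) G) F) z = 0) →
    ∃ c : Fin n → ℂ, ∀ z, F z = ∑ ℓ, c ℓ * expE (γ ℓ) z := by
  intro n
  induction n with
  | zero =>
    intro γ _ F _ hv
    exact ⟨Fin.elim0, fun z => by simpa using hv Fin.elim0 (fun i => i.elim0) z⟩
  | succ n ih =>
    intro γ hγ F hF hv
    set β := γ (Fin.last n) with hβ
    have key : ∀ u : Fin 2 → ℝ, u 0 ^ 2 + u 1 ^ 2 = 1 → ∃ c : Fin n → ℂ,
        ∀ z, Dop u β F z = ∑ ℓ, c ℓ * expE (γ ℓ.castSucc) z := by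
      intro u hu
      have := ih (fun ℓ => γ ℓ.castSucc) (fun ℓ ℓ' h => by
          have := hγ h
          exact Fin.castSucc_injective n this)
        (Dop u β F) (contDiff_Dop u β hF) ?_
      · obtain ⟨c, hc⟩ := this
        exact ⟨c, fun z => hc z⟩
      · intro v hvu z
        have h0 := hv (Fin.snoc v u) (fun i => by
          refine Fin.lastCases ?_ ?_ i
          · simpa using hu
          · intro j; simpa using hvu j) z
        rw [foldr_finRange_succ] at h0
        simp only [Fin.snoc_castSucc, Fin.snoc_last] at h0
        exact h0
    obtain ⟨a, ha⟩ := key ![1,0] unit_e1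
    obtain ⟨b, hb⟩ := key ![0,1] unit_e2
    set μ : Fin n → Fin 2 → ℂ := fun ℓ => γ ℓ.castSucc - β with hμ
    have hμ0 : ∀ ℓ, μ ℓ ≠ 0 := by
      intro ℓ h
      have : γ ℓ.castSucc = γ (Fin.last n) := by
        rw [← hβ]; exact sub_eq_zero.mp h
      exact absurd (hγ this) (Fin.ne_last_of_lt (Fin.castSucc_lt_last ℓ))
    have hμinj : Function.Injective μ := by
      intro ℓ ℓ' h
      exact Fin.castSucc_injective n (hγ (sub_left_inj.mp h))
    set H : (Fin 2 → ℝ) → ℂ := fun z => expE (-β) z * F z with hH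
    have hHs : ContDiff ℝ ∞ H := (contDiff_expE (-β)).mul hF
    have hfd : ∀ (z v : Fin 2 → ℝ), fderiv ℝ H z v = expE (-β) z * Dop v β F z := by
      intro z v
      have hmul : fderiv ℝ H z = expE (-β) z • fderiv ℝ F z + F z • fderiv ℝ (expE (-β)) z := by
        rw [hH]
        exact fderiv_mul ((contDiff_expE (-β)).differentiable (by decide) z)
          (hF.differentiable (by decide) z)
      rw [hmul]
      simp only [ContinuousLinearMap.add_apply, ContinuousLinearMap.coe_smul', Pi.smul_apply,
        smul_eq_mul, fderiv_expE, dotCR_neg, Dop]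
      ring
    have hone : ∀ z, expE β z * expE (-β) z = 1 := by
      intro z
      rw [expE_add]
      simp [expE, dotCR]
    have h1 : ∀ z, fderiv ℝ H z ![1,0] = ∑ ℓ, a ℓ * expE (μ ℓ) z := by
      intro z
      rw [hfd, ha z, Finset.mul_sum]
      refine Finset.sum_congr rfl fun ℓ _ => ?_
      rw [hμ]
      rw [show expE (-β) z * (a ℓ * expE (γ ℓ.castSucc) z)
          = a ℓ * (expE (-β) z * expE (γ ℓ.castSucc) z) by ring, expE_add]
      congr 2
      ring
    have h2 : ∀ z, fderiv ℝ H z ![0,1] = ∑ ℓ, b ℓ * expE (μ ℓ) z := by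
      intro z
      rw [hfd, hb z, Finset.mul_sum]
      refine Finset.sum_congr rfl fun ℓ _ => ?_
      rw [hμ]
      rw [show expE (-β) z * (b ℓ * expE (γ ℓ.castSucc) z)
          = b ℓ * (expE (-β) z * expE (γ ℓ.castSucc) z) by ring, expE_add]
      congr 2
      ring
    obtain ⟨c0, c, hc⟩ := step μ hμ0 hμinj H hHs a b h1 h2
    refine ⟨Fin.snoc c c0, fun z => ?_⟩
    have hFz : F z = expE β z * H z := by
      rw [hH]
      rw [show expE β z * (expE (-β) z * F z) = (expE β z * expE (-β) z) * F z by ring,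
        hone z, one_mul]
    rw [hFz, hc z, Fin.sum_univ_castSucc]
    simp only [Fin.snoc_castSucc, Fin.snoc_last]
    rw [mul_add, Finset.mul_sum]
    rw [add_comm]
    congr 1
    · refine Finset.sum_congr rfl fun ℓ _ => ?_
      rw [show expE β z * (c ℓ * expE (μ ℓ) z) = c ℓ * (expE β z * expE (μ ℓ) z) by ring,
        expE_add, hμ]
      congr 2
      ring
    · rw [mul_comm]

/-- Theorem 2.6: `D_{v¹}^{γ¹} ⋯ D_{vⁿ}^{γⁿ} F = 0` for all unit
vectors `v¹,…,vⁿ` iff `F` is a linear combination of the exponentials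
`exp((γ^ℓ)ᵀ z)`, where the pairwise distinct frequencies lie in `(ℝ ∪ i(-π,π))²`. -/
theorem stmt7 (n : ℕ) (γ : Fin n → Fin 2 → ℂ) (hinj : Function.Injective γ)
    (hdom : ∀ ℓ i, (γ ℓ i).im = 0 ∨
      ((γ ℓ i).re = 0 ∧ (γ ℓ i).im ∈ Set.Ioo (-Real.pi) Real.pi))
    (F : (Fin 2 → ℝ) → ℂ) (hF : ContDiff ℝ ⊤ F) :
    (∀ v : Fin n → Fin 2 → ℝ, (∀ i, (v i) 0 ^ 2 + (v i) 1 ^ 2 = 1) →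
      ∀ z, ((List.finRange n).foldr (fun i G => Dop (v i) (γ i) G) F) z = 0) ↔
    ∃ c : Fin n → ℂ, ∀ z, F z = ∑ ℓ, c ℓ * Complex.exp (dotCR (γ ℓ) z) := by
  constructor
  · intro hv
    obtain ⟨c, hc⟩ := forward n γ hinj F (hF.of_le le_top) hv
    exact ⟨c, fun z => by simpa [expE] using hc z⟩
  · rintro ⟨c, hc⟩ v hvu z
    have hFeq : F = fun z => ∑ ℓ, c ℓ * expE (γ ℓ) z := funext fun z => by
      rw [hc z]; rfl
    rw [hFeq, fold_exp]
    refine Finset.sum_eq_zero fun ℓ _ => ?_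
    have h0 : (0:ℂ) ∈ (List.finRange n).map
        (fun i => dotCR (γ ℓ) (v i) - dotCR (γ i) (v i)) := by
      exact List.mem_map.mpr ⟨ℓ, List.mem_finRange ℓ, by rw [sub_self]⟩
    rw [List.prod_eq_zero h0, mul_zero, zero_mul]
end

section
/- With Γ and F as above, if additionally Δ⁰_{tv}F(α+e) ≠ 0 for some α ∈ ℤ², e ∈ {(1,0)ᵀ,(0,1)ᵀ}, and nonzero tv ∈ ℤ², then cosh(γᵀe) = (Δ⁰_{tv}F(α+2e) + Δ⁰_{tv}F(α)) / (2·Δ⁰_{tv}F(α+e)). -/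
open Complex in
lemma pairlem (s x y : ℂ) :
    (Complex.exp (x + 2*s) - Complex.exp (y + 2*s)) + (Complex.exp x - Complex.exp y)
      = 2 * Complex.cosh s * (Complex.exp (x + s) - Complex.exp (y + s)) := by
  rw [Complex.cosh, show x + 2*s = (x+s)+s by ring, show y + 2*s = (y+s)+s by ring]
  simp only [Complex.exp_add, Complex.exp_neg]
  have := Complex.exp_ne_zero s
  field_simp

open Complex in
lemma alg (s t a b a' b' c₀ c₁ c₂ c₃ c₄ : ℂ)
    (hc : Complex.cosh t = Complex.cosh s) :
    Complex.cosh s *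
      (2 * ((c₀ + c₁ * exp (a + s) + c₂ * exp (-(a + s))
          + c₃ * exp (a' + t) + c₄ * exp (-(a' + t)))
        - (c₀ + c₁ * exp (b + s) + c₂ * exp (-(b + s))
          + c₃ * exp (b' + t) + c₄ * exp (-(b' + t))))) =
    ((c₀ + c₁ * exp (a + 2*s) + c₂ * exp (-(a + 2*s))
          + c₃ * exp (a' + 2*t) + c₄ * exp (-(a' + 2*t)))
      - (c₀ + c₁ * exp (b + 2*s) + c₂ * exp (-(b + 2*s))
          + c₃ * exp (b' + 2*t) + c₄ * exp (-(b' + 2*t))))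
    + ((c₀ + c₁ * exp a + c₂ * exp (-a) + c₃ * exp a' + c₄ * exp (-a'))
      - (c₀ + c₁ * exp b + c₂ * exp (-b) + c₃ * exp b' + c₄ * exp (-b'))) := by
  have p1 := pairlem s a b
  have p2 := pairlem (-s) (-a) (-b)
  have p3 := pairlem t a' b'
  have p4 := pairlem (-t) (-a') (-b')
  rw [Complex.cosh_neg] at p2 p4
  rw [hc] at p3 p4
  rw [show -a + 2*(-s) = -(a+2*s) by ring, show -b + 2*(-s) = -(b+2*s) by ring,
      show -a + -s = -(a+s) by ring, show -b + -s = -(b+s) by ring] at p2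
  rw [show -a' + 2*(-t) = -(a'+2*t) by ring, show -b' + 2*(-t) = -(b'+2*t) by ring,
      show -a' + -t = -(a'+t) by ring, show -b' + -t = -(b'+t) by ring] at p4
  linear_combination (-c₁) * p1 - c₂ * p2 - c₃ * p3 - c₄ * p4


/-- equation (9): with `F` as in Statement 15, if
`Δ⁰_{tv}F(α+e) ≠ 0` then
`cosh(γᵀe) = (Δ⁰_{tv}F(α+2e) + Δ⁰_{tv}F(α)) / (2 Δ⁰_{tv}F(α+e))`. -/
theorem stmt16 (γ : Fin 2 → ℂ) (F : (Fin 2 → ℝ) → ℂ)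
    (hF : ∃ c₀ c₁ c₂ c₃ c₄ : ℂ, ∀ z, F z =
      c₀ + c₁ * Complex.exp (dotCR γ z) + c₂ * Complex.exp (-dotCR γ z)
        + c₃ * Complex.exp (dotCR ![γ 0, -γ 1] z)
        + c₄ * Complex.exp (-dotCR ![γ 0, -γ 1] z))
    (e : Fin 2 → ℝ) (he : e = ![1, 0] ∨ e = ![0, 1])
    (α : Fin 2 → ℤ) (w : Fin 2 → ℤ) (hw : w ≠ 0)
    (hne : F (fun i => (α i : ℝ) + e i + (w i : ℝ)) - F (fun i => (α i : ℝ) + e i) ≠ 0) :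
    Complex.cosh (dotCR γ e) =
      ((F (fun i => (α i : ℝ) + 2 * e i + (w i : ℝ)) - F (fun i => (α i : ℝ) + 2 * e i))
        + (F (fun i => (α i : ℝ) + (w i : ℝ)) - F (fun i => (α i : ℝ))))
      / (2 * (F (fun i => (α i : ℝ) + e i + (w i : ℝ)) - F (fun i => (α i : ℝ) + e i))) := by
  obtain ⟨c₀, c₁, c₂, c₃, c₄, hFe⟩ := hF
  rw [eq_div_iff (mul_ne_zero two_ne_zero hne)]
  set γ' : Fin 2 → ℂ := ![γ 0, -γ 1] with hγ'
  set a := dotCR γ (fun i => (α i : ℝ) + (w i : ℝ)) with ha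
  set b := dotCR γ (fun i => (α i : ℝ)) with hb
  set a' := dotCR γ' (fun i => (α i : ℝ) + (w i : ℝ)) with ha'
  set b' := dotCR γ' (fun i => (α i : ℝ)) with hb'
  rcases he with rfl | rfl
  · have hs : dotCR γ ![1, 0] = γ 0 := by simp [dotCR]
    have d1 : dotCR γ (fun i => (α i : ℝ) + 2 * (![1,0] : Fin 2 → ℝ) i + (w i : ℝ)) = a + 2 * γ 0 := by
      simp [dotCR, ha]; push_cast; ring
    have d2 : dotCR γ' (fun i => (α i : ℝ) + 2 * (![1,0] : Fin 2 → ℝ) i + (w i : ℝ)) = a' + 2 * γ 0 := by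
      simp [dotCR, ha', hγ']; push_cast; ring
    have d3 : dotCR γ (fun i => (α i : ℝ) + 2 * (![1,0] : Fin 2 → ℝ) i) = b + 2 * γ 0 := by
      simp [dotCR, hb]; push_cast; ring
    have d4 : dotCR γ' (fun i => (α i : ℝ) + 2 * (![1,0] : Fin 2 → ℝ) i) = b' + 2 * γ 0 := by
      simp [dotCR, hb', hγ']; push_cast; ring
    have d5 : dotCR γ (fun i => (α i : ℝ) + (![1,0] : Fin 2 → ℝ) i + (w i : ℝ)) = a + γ 0 := by
      simp [dotCR, ha]; push_cast; ring
    have d6 : dotCR γ' (fun i => (α i : ℝ) + (![1,0] : Fin 2 → ℝ) i + (w i : ℝ)) = a' + γ 0 := by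
      simp [dotCR, ha', hγ']; push_cast; ring
    have d7 : dotCR γ (fun i => (α i : ℝ) + (![1,0] : Fin 2 → ℝ) i) = b + γ 0 := by
      simp [dotCR, hb]; push_cast; ring
    have d8 : dotCR γ' (fun i => (α i : ℝ) + (![1,0] : Fin 2 → ℝ) i) = b' + γ 0 := by
      simp [dotCR, hb', hγ']; push_cast; ring
    simp only [hFe, hs, d1, d2, d3, d4, d5, d6, d7, d8]
    exact alg (γ 0) (γ 0) a b a' b' c₀ c₁ c₂ c₃ c₄ rfl
  · have hs : dotCR γ ![0, 1] = γ 1 := by simp [dotCR]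
    have d1 : dotCR γ (fun i => (α i : ℝ) + 2 * (![0,1] : Fin 2 → ℝ) i + (w i : ℝ)) = a + 2 * γ 1 := by
      simp [dotCR, ha]; push_cast; ring
    have d2 : dotCR γ' (fun i => (α i : ℝ) + 2 * (![0,1] : Fin 2 → ℝ) i + (w i : ℝ)) = a' + 2 * (-γ 1) := by
      simp [dotCR, ha', hγ']; push_cast; ring
    have d3 : dotCR γ (fun i => (α i : ℝ) + 2 * (![0,1] : Fin 2 → ℝ) i) = b + 2 * γ 1 := by
      simp [dotCR, hb]; push_cast; ring
    have d4 : dotCR γ' (fun i => (α i : ℝ) + 2 * (![0,1] : Fin 2 → ℝ) i) = b' + 2 * (-γ 1) := by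
      simp [dotCR, hb', hγ']; push_cast; ring
    have d5 : dotCR γ (fun i => (α i : ℝ) + (![0,1] : Fin 2 → ℝ) i + (w i : ℝ)) = a + γ 1 := by
      simp [dotCR, ha]; push_cast; ring
    have d6 : dotCR γ' (fun i => (α i : ℝ) + (![0,1] : Fin 2 → ℝ) i + (w i : ℝ)) = a' + (-γ 1) := by
      simp [dotCR, ha', hγ']; push_cast; ring
    have d7 : dotCR γ (fun i => (α i : ℝ) + (![0,1] : Fin 2 → ℝ) i) = b + γ 1 := by
      simp [dotCR, hb]; push_cast; ring
    have d8 : dotCR γ' (fun i => (α i : ℝ) + (![0,1] : Fin 2 → ℝ) i) = b' + (-γ 1) := by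
      simp [dotCR, hb', hγ']; push_cast; ring
    simp only [hFe, hs, d1, d2, d3, d4, d5, d6, d7, d8]
    exact alg (γ 1) (-γ 1) a b a' b' c₀ c₁ c₂ c₃ c₄ (Complex.cosh_neg _)
end
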